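/- Let I be a TGICP such that: (a) mrk_q(F̃_x) = max{mrk_2, mrk_{12}}, where F̃_x is the fitting matrix of the SGICP formed by the receivers of I_2 and I_{12} together with message set P_2 ∪ P_{12} (as holds when F̃_x is a joint extension of F_x^{(2)} and F_x^{(12)} of the type constructed in the joint-extension theorem with minrank-achieving completions, in particular when all interactions between I_2 and I_{12} are fully-participated); and (b) either no receiver with demand in P_1 has side information in P_{12}, or no receiver with demand in P_{12} has side information in P_1 (Case II-D: at most one of the interactions I_1 → I_{12}, I_{12} → I_1 exists). Then l*_q(I) = mrk_1 + max{mrk_2, mrk_{12}}. -/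
import Mathlib


open scoped Classical
open Module Submodule Function

/-- `A ≈ F_x`: the matrix `A` completes the fitting matrix of the SGICP with demand map `f`
and side-information sets `χ`, i.e. `A` equals `1` at every demand entry and `0` at every
entry which is neither a demand entry nor a side-information entry. -/
def Completes {K : Type*} [Field K] {R M : Type*} (f : R → M) (χ : R → Set M)
    (A : Matrix R M K) : Prop :=
  (∀ i, A i (f i) = 1) ∧ ∀ i j, j ≠ f i → j ∉ χ i → A i j = 0

/-- `mrk_q(F_x)`: the minrank over `K` of the SGICP with demand map `f` and side
information `χ` — the minimum rank of a matrix completing its fitting matrix. -/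
noncomputable def minrk (K : Type*) [Field K] {R M : Type*} [Fintype M]
    (f : R → M) (χ : R → Set M) : ℕ :=
  sInf {r | ∃ A : Matrix R M K, Completes f χ A ∧ A.rank = r}

/-- A two-sender groupcast index coding problem (TGICP) with `m` messages and `n` receivers.
Sender `j` holds the messages indexed by `Mj`, receiver `i` demands message `f i` and has
side information `χ i`; every message is demanded by at least one receiver. -/
structure TGICP (m n : ℕ) where
  /-- indices of the messages available at sender 1 -/
  M1 : Set (Fin m)
  /-- indices of the messages available at sender 2 -/
  M2 : Set (Fin m)
  cover : M1 ∪ M2 = Set.univ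
  /-- demand map -/
  f : Fin n → Fin m
  /-- side-information sets -/
  χ : Fin n → Set (Fin m)
  not_mem : ∀ i, f i ∉ χ i
  surj : ∀ j, ∃ i, f i = j

namespace TGICP

variable {m n : ℕ}

/-- `(G1, G2)` is a valid scalar linear two-sender index code over `K`: each receiver can
decode its demanded message from the two transmitted codewords together with its side
information. -/
def IsCode (I : TGICP m n) (K : Type*) [Field K] {l1 l2 : ℕ}
    (G1 : Matrix (Fin l1) ↥I.M1 K) (G2 : Matrix (Fin l2) ↥I.M2 K) : Prop :=
  ∀ i : Fin n, ∃ D : (Fin l1 → K) → (Fin l2 → K) → (↥(I.χ i) → K) → K,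
    ∀ x : Fin m → K,
      D (G1.mulVec fun j => x j.1) (G2.mulVec fun j => x j.1) (fun j => x j.1) = x (I.f i)

/-- `l*_q(I)`: the optimal (minimum) aggregate length of a scalar linear two-sender index
code for `I` over `K`. -/
noncomputable def optLen (I : TGICP m n) (K : Type*) [Field K] : ℕ :=
  sInf {L | ∃ (l1 l2 : ℕ) (G1 : Matrix (Fin l1) ↥I.M1 K) (G2 : Matrix (Fin l2) ↥I.M2 K),
    I.IsCode K G1 G2 ∧ L = l1 + l2}

/-- The minrank over `K` of the single-sender sub-problem of `I` with message set `P`: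
its receivers are those demanding a message in `P`, with side information restricted
to `P`. -/
noncomputable def mrk (I : TGICP m n) (K : Type*) [Field K] (P : Set (Fin m)) : ℕ :=
  minrk K (fun i : {i : Fin n // I.f i ∈ P} => (⟨I.f i.1, i.2⟩ : ↥P))
    (fun i => {j : ↥P | j.1 ∈ I.χ i.1})

end TGICP


section Helpers

variable {K : Type*} [Field K] {α : Type*}

/-- Functions supported on a set `s`, as a submodule of `α → K`. -/
def suppSub (K : Type*) [Field K] (s : Set α) : Submodule K (α → K) where
  carrier := {v | ∀ j ∉ s, v j = 0}
  add_mem' := by intro a b ha hb j hj; simp [ha j hj, hb j hj]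
  zero_mem' := by intro j hj; rfl
  smul_mem' := by intro c v hv j hj; simp [hv j hj]

lemma mem_suppSub {s : Set α} {v : α → K} : v ∈ suppSub K s ↔ ∀ j ∉ s, v j = 0 := Iff.rfl

lemma single_mem_suppSub [DecidableEq α] {s : Set α} {j : α} (hj : j ∈ s) :
    (Pi.single j 1 : α → K) ∈ suppSub K s := by
  intro j' hj'
  exact Pi.single_eq_of_ne (by rintro rfl; exact hj' hj) 1

/-- Extension by zero, from a subtype to the full type. -/
noncomputable def extZ (K : Type*) [Field K] (P : Set α) : (↥P → K) →ₗ[K] (α → K) where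
  toFun v j := if h : j ∈ P then v ⟨j, h⟩ else 0
  map_add' v w := by ext j; by_cases h : j ∈ P <;> simp [h]
  map_smul' c v := by ext j; by_cases h : j ∈ P <;> simp [h]

lemma extZ_apply (P : Set α) (v : ↥P → K) (j : α) :
    extZ K P v j = if h : j ∈ P then v ⟨j, h⟩ else 0 := rfl

lemma extZ_apply_mem (P : Set α) (v : ↥P → K) (j : ↥P) : extZ K P v j.1 = v j := by
  simp [extZ_apply]

lemma extZ_mem_suppSub (P : Set α) (v : ↥P → K) : extZ K P v ∈ suppSub K P := by
  intro j hj; simp [extZ_apply, hj]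

lemma extZ_single [DecidableEq α] (P : Set α) (j : ↥P) :
    extZ K P (Pi.single j 1) = (Pi.single j.1 1 : α → K) := by
  ext j'
  by_cases h : j' ∈ P
  · simp only [extZ_apply, dif_pos h]
    rw [Pi.single_apply, Pi.single_apply]
    simp [Subtype.ext_iff]
  · have hne : j' ≠ j.1 := by rintro rfl; exact h j.2
    simp [extZ_apply, h, Pi.single_eq_of_ne hne]

end Helpers
section Helpers2

variable {K : Type*} [Field K] {α : Type*} [Fintype α]

lemma pi_single_decomp [DecidableEq α] (v : α → K) : ∑ j, v j • (Pi.single j 1 : α → K) = v := by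
  ext j'
  rw [Finset.sum_apply]
  simp [Pi.single_apply]

lemma dual_eq_sum [DecidableEq α] (φ : (α → K) →ₗ[K] K) (v : α → K) :
    φ v = ∑ j, v j * φ (Pi.single j 1) := by
  conv_lhs => rw [← pi_single_decomp v]
  rw [map_sum]
  simp [smul_eq_mul]

/-- a sum over the full type of a function supported on `s` equals the sum over `↥s`. -/
lemma sum_eq_sum_subtype (s : Set α) (g : α → K) (h : ∀ a ∉ s, g a = 0) :
    ∑ a, g a = ∑ a : ↥s, g a.1 := by
  classical
  rw [← Finset.sum_subtype s.toFinset (by simp) g]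
  exact (Finset.sum_subset (Finset.subset_univ _) (by intro x _ hx; exact h x (by simpa using hx))).symm

lemma dot_extZ (P : Set α) (v : ↥P → K) (x : α → K) :
    ∑ j, extZ K P v j * x j = ∑ j : ↥P, v j * x j.1 := by
  rw [sum_eq_sum_subtype P (fun j => extZ K P v j * x j)
    (fun a ha => by simp [extZ_apply, ha])]
  exact Finset.sum_congr rfl fun j _ => by rw [extZ_apply_mem]

end Helpers2

section MinrkLemmas

variable {K : Type*} [Field K] {R M : Type*} [Fintype M] [Finite R]

lemma minrk_exists (f : R → M) (χ : R → Set M) :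
    ∃ A : Matrix R M K, Completes f χ A ∧ A.rank = minrk K f χ := by
  have hne : {r | ∃ A : Matrix R M K, Completes f χ A ∧ A.rank = r}.Nonempty := by
    refine ⟨_, (fun i j => if j = f i then 1 else 0 : Matrix R M K), ⟨?_, ?_⟩, rfl⟩
    · intro i; simp
    · intro i j hj _; simp [hj]
  exact Nat.sInf_mem hne

lemma minrk_le (f : R → M) (χ : R → Set M) {A : Matrix R M K} (hA : Completes f χ A) :
    minrk K f χ ≤ A.rank :=
  Nat.sInf_le ⟨A, hA, rfl⟩

lemma rank_le_finrank_of_rows_mem {W : Submodule K (M → K)} {A : Matrix R M K}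
    (h : ∀ i, A i ∈ W) : A.rank ≤ Module.finrank K W := by
  rw [Matrix.rank_eq_finrank_span_row]
  exact Submodule.finrank_mono (Submodule.span_le.2 (Set.range_subset_iff.2 h))

/-- the workhorse upper bound on `minrk`. -/
lemma minrk_le_finrank [DecidableEq M] (f : R → M) (χ : R → Set M) (hf : ∀ i, f i ∉ χ i)
    (W : Submodule K (M → K))
    (hmem : ∀ i, ∃ r ∈ W, ∃ s ∈ suppSub K (χ i), (Pi.single (f i) 1 : M → K) = r + s) :
    minrk K f χ ≤ Module.finrank K W := by
  choose r hrW s hs hdec using hmem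
  have hC : Completes f χ (Matrix.of r) := by
    constructor
    · intro i
      have := congrFun (hdec i) (f i)
      rw [Pi.single_eq_same, Pi.add_apply, hs i (f i) (hf i)] at this
      simpa using this.symm
    · intro i j hj hjx
      have := congrFun (hdec i) j
      rw [Pi.single_eq_of_ne hj, Pi.add_apply, hs i j hjx] at this
      simpa using this.symm
  exact le_trans (minrk_le f χ hC) (rank_le_finrank_of_rows_mem hrW)

end MinrkLemmas

section CodeMem

variable {K : Type*} [Field K] {m n : ℕ}

/-- the linear functional `v ↦ ∑ j, v j * x j`. -/
noncomputable def dotL (K : Type*) [Field K] {α : Type*} [Fintype α] (x : α → K) :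
    (α → K) →ₗ[K] K where
  toFun v := ∑ j, v j * x j
  map_add' v w := by simp [add_mul, Finset.sum_add_distrib]
  map_smul' c v := by simp [Finset.mul_sum, mul_assoc]

lemma dotL_apply {α : Type*} [Fintype α] (x v : α → K) : dotL K x v = ∑ j, v j * x j := rfl

lemma dotL_single {α : Type*} [Fintype α] [DecidableEq α] (x : α → K) (j : α) :
    dotL K x (Pi.single j 1) = x j := by
  rw [dotL_apply]
  simp [Pi.single_apply, ite_mul]

lemma dotL_extZ {α : Type*} [Fintype α] (P : Set α) (w : ↥P → K) (x : α → K) :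
    dotL K x (extZ K P w) = ∑ j : ↥P, w j * x j.1 := by
  rw [dotL_apply, dot_extZ]

lemma mulVec_eq_dotL {l : ℕ} {P : Set (Fin m)} (G : Matrix (Fin l) ↥P K) (x : Fin m → K)
    (k : Fin l) : (G.mulVec fun j => x j.1) k = dotL K x (extZ K P (G k)) := by
  rw [dotL_extZ]
  rfl

lemma isCode_of_mem (I : TGICP m n) {l1 l2 : ℕ}
    (G1 : Matrix (Fin l1) ↥I.M1 K) (G2 : Matrix (Fin l2) ↥I.M2 K)
    (hmem : ∀ i, (Pi.single (I.f i) 1 : Fin m → K) ∈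
      (Submodule.span K (Set.range fun k => extZ K I.M1 (G1 k)) ⊔
       Submodule.span K (Set.range fun k => extZ K I.M2 (G2 k))) ⊔ suppSub K (I.χ i)) :
    I.IsCode K G1 G2 := by
  intro i
  obtain ⟨a, ha, s, hs, hsum⟩ := Submodule.mem_sup.1 (hmem i)
  obtain ⟨a1, ha1, a2, ha2, hasum⟩ := Submodule.mem_sup.1 ha
  obtain ⟨c, hc⟩ := (mem_span_range_iff_exists_fun K).1 ha1
  obtain ⟨d, hd⟩ := (mem_span_range_iff_exists_fun K).1 ha2
  refine ⟨fun y1 y2 z => (∑ k, c k * y1 k) + (∑ k, d k * y2 k)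
    + ∑ j, (if h : j ∈ I.χ i then s j * z ⟨j, h⟩ else 0), fun x => ?_⟩
  have h1 : ∑ k, c k * (G1.mulVec fun j => x j.1) k = dotL K x a1 := by
    rw [← hc, map_sum]
    exact Finset.sum_congr rfl fun k _ => by rw [mulVec_eq_dotL, map_smul, smul_eq_mul]
  have h2 : ∑ k, d k * (G2.mulVec fun j => x j.1) k = dotL K x a2 := by
    rw [← hd, map_sum]
    exact Finset.sum_congr rfl fun k _ => by rw [mulVec_eq_dotL, map_smul, smul_eq_mul]
  have h3 : ∑ j, (if h : j ∈ I.χ i then s j * x j else 0) = dotL K x s := by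
    rw [dotL_apply]
    refine Finset.sum_congr rfl fun j _ => ?_
    by_cases h : j ∈ I.χ i
    · simp [h]
    · simp [h, hs j h]
  simp only [h1, h2, h3]
  rw [← map_add, ← map_add, hasum, hsum, dotL_single]

lemma mem_of_isCode (I : TGICP m n) {l1 l2 : ℕ}
    {G1 : Matrix (Fin l1) ↥I.M1 K} {G2 : Matrix (Fin l2) ↥I.M2 K}
    (hcode : I.IsCode K G1 G2) (i : Fin n) :
    (Pi.single (I.f i) 1 : Fin m → K) ∈
      (Submodule.span K (Set.range fun k => extZ K I.M1 (G1 k)) ⊔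
       Submodule.span K (Set.range fun k => extZ K I.M2 (G2 k))) ⊔ suppSub K (I.χ i) := by
  by_contra hv
  set U := (Submodule.span K (Set.range fun k => extZ K I.M1 (G1 k)) ⊔
       Submodule.span K (Set.range fun k => extZ K I.M2 (G2 k))) ⊔ suppSub K (I.χ i) with hU
  obtain ⟨φ, hφU, hφv⟩ : ∃ φ : Module.Dual K (Fin m → K),
      (∀ w ∈ U, φ w = 0) ∧ φ (Pi.single (I.f i) 1) ≠ 0 := by
    by_contra hcon
    push_neg at hcon
    refine hv ((Subspace.forall_mem_dualAnnihilator_apply_eq_zero_iff U _).1 ?_)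
    intro φ hφ
    exact hcon φ (fun w hw => (Submodule.mem_dualAnnihilator φ).1 hφ w hw)
  set x : Fin m → K := fun j => φ (Pi.single j 1) with hx
  have hφdot : ∀ v : Fin m → K, φ v = dotL K x v := by
    intro v
    rw [dotL_apply, dual_eq_sum]
  have hG1 : (G1.mulVec fun j => x j.1) = 0 := by
    funext k
    rw [mulVec_eq_dotL, ← hφdot]
    refine hφU _ (Submodule.mem_sup_left (Submodule.mem_sup_left
      (Submodule.subset_span ⟨k, rfl⟩)))
  have hG2 : (G2.mulVec fun j => x j.1) = 0 := by
    funext k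
    rw [mulVec_eq_dotL, ← hφdot]
    refine hφU _ (Submodule.mem_sup_left (Submodule.mem_sup_right
      (Submodule.subset_span ⟨k, rfl⟩)))
  have hχ : (fun j : ↥(I.χ i) => x j.1) = 0 := by
    funext j
    exact hφU _ (Submodule.mem_sup_right (single_mem_suppSub j.2))
  obtain ⟨D, hD⟩ := hcode i
  have hzero := hD 0
  have hxx := hD x
  rw [hG1, hG2, hχ] at hxx
  have hz1 : (fun j : ↥I.M1 => (0 : Fin m → K) j.1) = 0 := rfl
  have hz2 : (fun j : ↥I.M2 => (0 : Fin m → K) j.1) = 0 := rfl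
  have hz3 : (fun j : ↥(I.χ i) => (0 : Fin m → K) j.1) = 0 := rfl
  rw [hz1, hz2, hz3, Matrix.mulVec_zero, Matrix.mulVec_zero, Pi.zero_apply] at hzero
  rw [hzero] at hxx
  exact hφv hxx.symm

end CodeMem


section Bridge

/-- `TGICP.mrk` is `minrk` for any choice of `Fintype` instance on `↥P`. -/
lemma mrk_eq_minrk (K : Type*) [Field K] {m n : ℕ} (I : TGICP m n) (P : Set (Fin m))
    (inst : Fintype ↥P) :
    I.mrk K P = @minrk K _ {i : Fin n // I.f i ∈ P} ↥P inst
      (fun i => (⟨I.f i.1, i.2⟩ : ↥P)) (fun i => {j : ↥P | j.1 ∈ I.χ i.1}) := by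
  unfold TGICP.mrk
  congr 1
  exact Subsingleton.elim _ _

end Bridge

section UpperBound

variable {K : Type*} [Field K] {m n : ℕ}

lemma span_range_finBasis_val {E : Type*} [AddCommGroup E] [Module K E]
    (V : Submodule K E) [FiniteDimensional K V] :
    Submodule.span K (Set.range fun k : Fin (Module.finrank K ↥V) =>
      ((Module.finBasis K ↥V) k : E)) = V := by
  have : (Set.range fun k : Fin (Module.finrank K ↥V) => ((Module.finBasis K ↥V) k : E))
      = V.subtype '' Set.range (Module.finBasis K ↥V) := by
    rw [← Set.range_comp]; rfl
  rw [this, ← Submodule.map_span, Basis.span_eq, Submodule.map_subtype_top]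

/-- the rows of a completion of an `I`-sub-problem on `P`, extended by zero, decompose
the demand basis vectors. -/
lemma single_decomp_of_completes [DecidableEq (Fin m)] (I : TGICP m n) (P : Set (Fin m))
    (A : Matrix {i : Fin n // I.f i ∈ P} ↥P K)
    (hA : Completes (fun i : {i : Fin n // I.f i ∈ P} => (⟨I.f i.1, i.2⟩ : ↥P))
      (fun i => {j : ↥P | j.1 ∈ I.χ i.1}) A)
    (W : Submodule K (Fin m → K)) (hrows : ∀ i', extZ K P (A i') ∈ W)
    (i : Fin n) (hfi : I.f i ∈ P) :
    ∃ r ∈ W, ∃ s ∈ suppSub K (I.χ i), (Pi.single (I.f i) 1 : Fin m → K) = r + s := by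
  classical
  set i' : {i : Fin n // I.f i ∈ P} := ⟨i, hfi⟩
  set s' : ↥P → K := Pi.single (⟨I.f i, hfi⟩ : ↥P) 1 - A i' with hs'
  refine ⟨extZ K P (A i'), hrows i', extZ K P s', ?_, ?_⟩
  · intro j hj
    rw [extZ_apply]
    split
    · next h =>
      by_cases hfj : j = I.f i
      · have hje : (⟨j, h⟩ : ↥P) = ⟨I.f i, hfi⟩ := Subtype.ext hfj
        have h1 : A i' (⟨j, h⟩ : ↥P) = 1 := by rw [hje]; exact hA.1 i'
        rw [hs', Pi.sub_apply, h1, hje, Pi.single_eq_same, sub_self]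
      · have h0 : A i' (⟨j, h⟩ : ↥P) = 0 := by
          refine hA.2 i' ⟨j, h⟩ ?_ ?_
          · exact fun hc => hfj (congrArg Subtype.val hc)
          · exact hj
        have hne : (⟨j, h⟩ : ↥P) ≠ (⟨I.f i, hfi⟩ : ↥P) :=
          fun hc => hfj (congrArg Subtype.val hc)
        simp [hs', h0, Pi.single_eq_of_ne hne]
    · rfl
  · rw [← map_add]
    have : A i' + s' = Pi.single (⟨I.f i, hfi⟩ : ↥P) 1 := by
      rw [hs']; abel
    rw [this, extZ_single]

lemma exists_code_opt_aux (K : Type*) [Field K] (I : TGICP m n) :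
    ∃ (l1 l2 : ℕ) (G1 : Matrix (Fin l1) ↥I.M1 K) (G2 : Matrix (Fin l2) ↥I.M2 K),
      I.IsCode K G1 G2 ∧ l1 + l2 = I.mrk K (I.M1 \ I.M2) + I.mrk K I.M2 := by
  classical
  obtain ⟨A1, hA1C, hA1r⟩ := minrk_exists (K := K)
    (fun i : {i : Fin n // I.f i ∈ I.M1 \ I.M2} => (⟨I.f i.1, i.2⟩ : ↥(I.M1 \ I.M2)))
    (fun i => {j : ↥(I.M1 \ I.M2) | j.1 ∈ I.χ i.1})
  obtain ⟨B, hBC, hBr⟩ := minrk_exists (K := K)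
    (fun i : {i : Fin n // I.f i ∈ I.M2} => (⟨I.f i.1, i.2⟩ : ↥I.M2))
    (fun i => {j : ↥I.M2 | j.1 ∈ I.χ i.1})
  set V1 : Submodule K (↥(I.M1 \ I.M2) → K) := Submodule.span K (Set.range A1) with hV1
  set V2 : Submodule K (↥I.M2 → K) := Submodule.span K (Set.range B) with hV2
  set l1 := Module.finrank K ↥V1
  set l2 := Module.finrank K ↥V2
  set b1 := Module.finBasis K ↥V1
  set b2 := Module.finBasis K ↥V2
  set G1 : Matrix (Fin l1) ↥I.M1 K :=
    fun k j => if h : j.1 ∈ I.M1 \ I.M2 then (b1 k).1 ⟨j.1, h⟩ else 0 with hG1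
  set G2 : Matrix (Fin l2) ↥I.M2 K := fun k => (b2 k).1 with hG2
  have hG1ext : ∀ k, extZ K I.M1 (G1 k) = extZ K (I.M1 \ I.M2) (b1 k).1 := by
    intro k
    funext j
    rw [extZ_apply, extZ_apply]
    by_cases h : j ∈ I.M1 \ I.M2
    · rw [dif_pos h.1, dif_pos h, hG1]
      simp [h]
    · rw [dif_neg h]
      split
      · next h1 => exact dif_neg h
      · rfl
  set W1 := Submodule.span K (Set.range fun k => extZ K I.M1 (G1 k)) with hW1
  set W2 := Submodule.span K (Set.range fun k => extZ K I.M2 (G2 k)) with hW2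
  have hrows1 : ∀ i', extZ K (I.M1 \ I.M2) (A1 i') ∈ W1 := by
    intro i'
    have hmem : A1 i' ∈ V1 := Submodule.subset_span ⟨i', rfl⟩
    have : extZ K (I.M1 \ I.M2) (A1 i') ∈ V1.map (extZ K (I.M1 \ I.M2)) :=
      Submodule.mem_map_of_mem hmem
    rw [← span_range_finBasis_val V1, Submodule.map_span] at this
    refine Submodule.span_le.2 ?_ this
    rintro v ⟨w, ⟨k, rfl⟩, rfl⟩
    exact Submodule.subset_span ⟨k, hG1ext k⟩
  have hrows2 : ∀ i', extZ K I.M2 (B i') ∈ W2 := by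
    intro i'
    have hmem : B i' ∈ V2 := Submodule.subset_span ⟨i', rfl⟩
    have : extZ K I.M2 (B i') ∈ V2.map (extZ K I.M2) :=
      Submodule.mem_map_of_mem hmem
    rw [← span_range_finBasis_val V2, Submodule.map_span] at this
    refine Submodule.span_le.2 ?_ this
    rintro v ⟨w, ⟨k, rfl⟩, rfl⟩
    exact Submodule.subset_span ⟨k, rfl⟩
  have hcode : I.IsCode K G1 G2 := by
    refine isCode_of_mem I G1 G2 fun i => ?_
    by_cases hfi : I.f i ∈ I.M1 \ I.M2
    · obtain ⟨r, hr, s, hs, hdec⟩ :=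
        single_decomp_of_completes I (I.M1 \ I.M2) A1 hA1C W1 hrows1 i hfi
      rw [hdec]
      exact Submodule.add_mem _ (Submodule.mem_sup_left (Submodule.mem_sup_left hr))
        (Submodule.mem_sup_right hs)
    · have hfi2 : I.f i ∈ I.M2 := by
        have := I.cover.ge (Set.mem_univ (I.f i))
        rcases this with h | h
        · by_contra hc; exact hfi ⟨h, hc⟩
        · exact h
      obtain ⟨r, hr, s, hs, hdec⟩ :=
        single_decomp_of_completes I I.M2 B hBC W2 hrows2 i hfi2
      rw [hdec]
      exact Submodule.add_mem _ (Submodule.mem_sup_left (Submodule.mem_sup_right hr))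
        (Submodule.mem_sup_right hs)
  have hl1 : l1 = I.mrk K (I.M1 \ I.M2) := by
    rw [Matrix.rank_eq_finrank_span_row] at hA1r
    exact hA1r.trans (mrk_eq_minrk K I _ _).symm
  have hl2 : l2 = I.mrk K I.M2 := by
    rw [Matrix.rank_eq_finrank_span_row] at hBr
    exact hBr.trans (mrk_eq_minrk K I _ _).symm
  exact ⟨l1, l2, G1, G2, hcode, by rw [hl1, hl2]⟩

end UpperBound

section LowerBound

variable {K : Type*} [Field K] {m n : ℕ}

lemma funLeft_single_inj {β α : Type*} [DecidableEq α] [DecidableEq β]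
    (g : β → α) (hg : Function.Injective g) (b : β) :
    LinearMap.funLeft K K g (Pi.single (g b) 1) = Pi.single b 1 := by
  funext c
  simp only [LinearMap.funLeft_apply]
  rw [Pi.single_apply, Pi.single_apply]
  simp [hg.eq_iff]

lemma finrank_span_range_sup {E : Type*} [AddCommGroup E] [Module K E] {l1 l2 : ℕ}
    (v : Fin l1 → E) (w : Fin l2 → E) :
    Module.finrank K ↥(Submodule.span K (Set.range v) ⊔ Submodule.span K (Set.range w))
      ≤ l1 + l2 := by
  rw [← Submodule.span_union, ← Set.Sum.elim_range]
  have h := finrank_range_le_card (R := K) (Sum.elim v w)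
  rw [Set.finrank] at h
  simpa using h

lemma finrank_eq_map_add_inf_ker {E F : Type*} [AddCommGroup E] [Module K E]
    [AddCommGroup F] [Module K F] [FiniteDimensional K E]
    (W : Submodule K E) (π : E →ₗ[K] F) :
    Module.finrank K ↥W =
      Module.finrank K ↥(W.map π) + Module.finrank K ↥(W ⊓ LinearMap.ker π) := by
  have h := LinearMap.finrank_range_add_finrank_ker (π.comp W.subtype)
  rw [LinearMap.range_comp, Submodule.range_subtype, LinearMap.ker_comp] at h
  have h2 : Module.finrank K ↥(Submodule.comap W.subtype (LinearMap.ker π))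
      = Module.finrank K ↥(W ⊓ LinearMap.ker π) := by
    have e := Submodule.equivMapOfInjective W.subtype (Submodule.injective_subtype W)
      (Submodule.comap W.subtype (LinearMap.ker π))
    rw [Submodule.map_comap_subtype] at e
    exact e.finrank_eq
  rw [h2] at h
  exact h.symm

/-- the single-block lower bound: if for every receiver demanding in `C` the demand
vector decomposes into a part in `W` and a part supported on the side information,
then `mrk C ≤ dim W`. -/
lemma mrk_le_finrank (I : TGICP m n) (C : Set (Fin m)) (W : Submodule K (↥C → K))
    (hmem : ∀ i (h : I.f i ∈ C), ∃ r ∈ W, ∃ s ∈ suppSub K {j : ↥C | j.1 ∈ I.χ i},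
        (Pi.single (⟨I.f i, h⟩ : ↥C) 1 : ↥C → K) = r + s) :
    I.mrk K C ≤ Module.finrank K ↥W := by
  rw [mrk_eq_minrk K I C inferInstance]
  refine minrk_le_finrank _ _ (fun i => ?_) W (fun i => hmem i.1 i.2)
  exact fun hc => I.not_mem i.1 hc

/-- single-sender lower bound: if all demand vectors for `P` decompose into a part from
`Wk`, a part supported on `Q` (disjoint from `P`), and a side-information part, then
`mrk P ≤ dim Wk`. -/
lemma mrk_le_of_mem (I : TGICP m n) (P : Set (Fin m)) (Wk : Submodule K (Fin m → K))
    (Q : Set (Fin m)) (hQ : ∀ j ∈ P, j ∉ Q)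
    (hmem : ∀ i, I.f i ∈ P → ∃ w ∈ Wk, ∃ u ∈ suppSub K Q, ∃ s ∈ suppSub K (I.χ i),
        (Pi.single (I.f i) 1 : Fin m → K) = w + u + s) :
    I.mrk K P ≤ Module.finrank K ↥Wk := by
  classical
  set π : (Fin m → K) →ₗ[K] (↥P → K) := LinearMap.funLeft K K (Subtype.val : ↥P → Fin m)
  refine le_trans (mrk_le_finrank I P (Wk.map π) ?_) (Submodule.finrank_map_le π Wk)
  intro i h
  obtain ⟨w, hw, u, hu, s, hs, hdec⟩ := hmem i h
  refine ⟨π w, Submodule.mem_map_of_mem hw, π s, ?_, ?_⟩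
  · intro j hj
    exact hs j.1 hj
  · have h1 : π (Pi.single (I.f i) 1) = Pi.single (⟨I.f i, h⟩ : ↥P) 1 :=
      funLeft_single_inj (Subtype.val : ↥P → Fin m) Subtype.val_injective ⟨I.f i, h⟩
    have h2 : π u = 0 := by
      funext j
      exact hu j.1 (hQ j.1 j.2)
    rw [← h1, hdec, map_add, map_add, h2, add_zero]

/-- the two-block lower bound (block-triangular rank argument): if the receivers of `P`
have no side information in `Q`, then `mrk P + mrk Q ≤ dim W`. -/
lemma mrk_two_block (I : TGICP m n) (C P Q : Set (Fin m)) (hP : P ⊆ C) (hQ : Q ⊆ C)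
    (hdisj : ∀ j ∈ P, j ∉ Q)
    (W : Submodule K (↥C → K))
    (hmem : ∀ i (h : I.f i ∈ C), ∃ r ∈ W, ∃ s ∈ suppSub K {j : ↥C | j.1 ∈ I.χ i},
        (Pi.single (⟨I.f i, h⟩ : ↥C) 1 : ↥C → K) = r + s)
    (hblock : ∀ i, I.f i ∈ P → ∀ p ∈ I.χ i, p ∉ Q) :
    I.mrk K P + I.mrk K Q ≤ Module.finrank K ↥W := by
  classical
  choose r hr s hs hdec using hmem
  set πQ : (↥C → K) →ₗ[K] (↥Q → K) := LinearMap.funLeft K K (Set.inclusion hQ) with hπQ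
  set πP : (↥C → K) →ₗ[K] (↥P → K) := LinearMap.funLeft K K (Set.inclusion hP) with hπP
  -- the rows of the `P`-block
  set V : Submodule K (↥C → K) :=
    Submodule.span K (Set.range fun i' : {i : Fin n // I.f i ∈ P} => r i'.1 (hP i'.2)) with hV
  -- each `P`-row vanishes on the `Q`-columns
  have hrowQ : ∀ (i : Fin n) (hi : I.f i ∈ P), πQ (r i (hP hi)) = 0 := by
    intro i hi
    funext j
    have hd := congrFun (hdec i (hP hi)) (Set.inclusion hQ j)
    have h1 : (Pi.single (⟨I.f i, hP hi⟩ : ↥C) 1 : ↥C → K) (Set.inclusion hQ j) = 0 := by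
      refine Pi.single_eq_of_ne ?_ 1
      intro hc
      have hv : (j : Fin m) = I.f i := congrArg Subtype.val hc
      exact hdisj (I.f i) hi (hv ▸ j.2)
    have h2 : s i (hP hi) (Set.inclusion hQ j) = 0 :=
      hs i (hP hi) (Set.inclusion hQ j) (fun hmem' => hblock i hi j.1 hmem' j.2)
    rw [h1, Pi.add_apply, h2, add_zero] at hd
    simpa [hπQ] using hd.symm
  have hVle : V ≤ W ⊓ LinearMap.ker πQ := by
    rw [hV]
    refine Submodule.span_le.2 ?_
    rintro v ⟨i', rfl⟩
    exact ⟨hr i'.1 (hP i'.2), LinearMap.mem_ker.2 (hrowQ i'.1 i'.2)⟩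
  -- the `Q`-block gives `mrk Q`
  have hQbound : I.mrk K Q ≤ Module.finrank K ↥(W.map πQ) := by
    refine mrk_le_finrank I Q (W.map πQ) fun i h => ?_
    have hC : I.f i ∈ C := hQ h
    refine ⟨πQ (r i hC), Submodule.mem_map_of_mem (hr i hC), πQ (s i hC), ?_, ?_⟩
    · intro j hj
      exact hs i hC _ hj
    · have h1 : πQ (Pi.single (⟨I.f i, hC⟩ : ↥C) 1) = Pi.single (⟨I.f i, h⟩ : ↥Q) 1 :=
        funLeft_single_inj (Set.inclusion hQ) (Set.inclusion_injective hQ) ⟨I.f i, h⟩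
      rw [← h1, hdec i hC, map_add]
  -- the `P`-block gives `mrk P`
  have hPbound : I.mrk K P ≤ Module.finrank K ↥(V.map πP) := by
    refine mrk_le_finrank I P (V.map πP) fun i h => ?_
    have hC : I.f i ∈ C := hP h
    have hrV : r i hC ∈ V := by
      rw [hV]
      exact Submodule.subset_span ⟨⟨i, h⟩, rfl⟩
    refine ⟨πP (r i hC), Submodule.mem_map_of_mem hrV, πP (s i hC), ?_, ?_⟩
    · intro j hj
      exact hs i hC _ hj
    · have h1 : πP (Pi.single (⟨I.f i, hC⟩ : ↥C) 1) = Pi.single (⟨I.f i, h⟩ : ↥P) 1 :=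
        funLeft_single_inj (Set.inclusion hP) (Set.inclusion_injective hP) ⟨I.f i, h⟩
      rw [← h1, hdec i hC, map_add]
  have hfin : Module.finrank K ↥W =
      Module.finrank K ↥(W.map πQ) + Module.finrank K ↥(W ⊓ LinearMap.ker πQ) :=
    finrank_eq_map_add_inf_ker W πQ
  have hVfin : Module.finrank K ↥(V.map πP) ≤ Module.finrank K ↥(W ⊓ LinearMap.ker πQ) :=
    le_trans (Submodule.finrank_map_le πP V) (Submodule.finrank_mono hVle)
  omega
end LowerBound

section Assemble

variable {K : Type*} [Field K] {m n : ℕ}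

lemma exists_code_opt (K : Type*) [Field K] (I : TGICP m n) :
    ∃ L ∈ {L : ℕ | ∃ (l1 l2 : ℕ) (G1 : Matrix (Fin l1) ↥I.M1 K)
        (G2 : Matrix (Fin l2) ↥I.M2 K), I.IsCode K G1 G2 ∧ L = l1 + l2},
      L = I.mrk K (I.M1 \ I.M2) + I.mrk K I.M2 := by
  obtain ⟨l1, l2, G1, G2, hcode, hl⟩ := exists_code_opt_aux K I
  exact ⟨l1 + l2, ⟨l1, l2, G1, G2, hcode, rfl⟩, hl⟩

lemma code_lower_bound (I : TGICP m n)
    (hb : (¬ ∃ i, I.f i ∈ I.M1 \ I.M2 ∧ ∃ p ∈ I.χ i, p ∈ I.M1 ∩ I.M2) ∨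
      (¬ ∃ i, I.f i ∈ I.M1 ∩ I.M2 ∧ ∃ p ∈ I.χ i, p ∈ I.M1 \ I.M2))
    {l1 l2 : ℕ} (G1 : Matrix (Fin l1) ↥I.M1 K) (G2 : Matrix (Fin l2) ↥I.M2 K)
    (hcode : I.IsCode K G1 G2) :
    I.mrk K (I.M1 \ I.M2) + max (I.mrk K (I.M2 \ I.M1)) (I.mrk K (I.M1 ∩ I.M2))
      ≤ l1 + l2 := by
  classical
  set W1 := Submodule.span K (Set.range fun k => extZ K I.M1 (G1 k)) with hW1
  set W2 := Submodule.span K (Set.range fun k => extZ K I.M2 (G2 k)) with hW2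
  have hW1s : W1 ≤ suppSub K I.M1 :=
    Submodule.span_le.2 (by rintro v ⟨k, rfl⟩; exact extZ_mem_suppSub _ _)
  have hW2s : W2 ≤ suppSub K I.M2 :=
    Submodule.span_le.2 (by rintro v ⟨k, rfl⟩; exact extZ_mem_suppSub _ _)
  have hW1fin : Module.finrank K ↥W1 ≤ l1 := by
    have h := finrank_range_le_card (R := K) (fun k => extZ K I.M1 (G1 k))
    rw [Set.finrank] at h
    simpa using h
  have hW2fin : Module.finrank K ↥W2 ≤ l2 := by
    have h := finrank_range_le_card (R := K) (fun k => extZ K I.M2 (G2 k))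
    rw [Set.finrank] at h
    simpa using h
  have hmem : ∀ i, ∃ a1 ∈ W1, ∃ a2 ∈ W2, ∃ s ∈ suppSub K (I.χ i),
      (Pi.single (I.f i) 1 : Fin m → K) = a1 + a2 + s := by
    intro i
    have h := mem_of_isCode I hcode i
    obtain ⟨a, ha, s, hs, hsum⟩ := Submodule.mem_sup.1 h
    obtain ⟨a1, ha1, a2, ha2, hasum⟩ := Submodule.mem_sup.1 ha
    exact ⟨a1, ha1, a2, ha2, s, hs, by rw [← hsum, ← hasum]⟩
  have hb1 : I.mrk K (I.M1 \ I.M2) ≤ l1 := by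
    refine le_trans (mrk_le_of_mem I _ W1 I.M2 (fun j hj => hj.2) fun i h => ?_) hW1fin
    obtain ⟨a1, ha1, a2, ha2, s, hs, hd⟩ := hmem i
    exact ⟨a1, ha1, a2, hW2s ha2, s, hs, hd⟩
  have hb2 : I.mrk K (I.M2 \ I.M1) ≤ l2 := by
    refine le_trans (mrk_le_of_mem I _ W2 I.M1 (fun j hj => hj.2) fun i h => ?_) hW2fin
    obtain ⟨a1, ha1, a2, ha2, s, hs, hd⟩ := hmem i
    exact ⟨a2, ha2, a1, hW1s ha1, s, hs, by rw [hd]; abel⟩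
  have hb12 : I.mrk K (I.M1 \ I.M2) + I.mrk K (I.M1 ∩ I.M2) ≤ l1 + l2 := by
    set π := LinearMap.funLeft K K (Subtype.val : ↥I.M1 → Fin m) with hπ
    set W := (W1 ⊔ W2).map π with hW
    have hWfin : Module.finrank K ↥W ≤ l1 + l2 :=
      le_trans (Submodule.finrank_map_le _ _) (finrank_span_range_sup _ _)
    have hmem' : ∀ i (h : I.f i ∈ I.M1), ∃ r ∈ W,
        ∃ s' ∈ suppSub K {j : ↥I.M1 | j.1 ∈ I.χ i},
        (Pi.single (⟨I.f i, h⟩ : ↥I.M1) 1 : ↥I.M1 → K) = r + s' := by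
      intro i h
      obtain ⟨a1, ha1, a2, ha2, s, hs, hd⟩ := hmem i
      refine ⟨π (a1 + a2), Submodule.mem_map_of_mem
        (Submodule.add_mem _ (Submodule.mem_sup_left ha1) (Submodule.mem_sup_right ha2)),
        π s, fun j hj => hs j.1 hj, ?_⟩
      have h1 : π (Pi.single (I.f i) 1) = Pi.single (⟨I.f i, h⟩ : ↥I.M1) 1 :=
        funLeft_single_inj _ Subtype.val_injective ⟨I.f i, h⟩
      rw [← h1, hd, map_add]
    rcases hb with hb1' | hb2'
    · push_neg at hb1'
      refine le_trans (mrk_two_block I I.M1 (I.M1 \ I.M2) (I.M1 ∩ I.M2) Set.diff_subset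
        Set.inter_subset_left (fun j hj hc => hj.2 hc.2) W hmem' ?_) hWfin
      exact fun i hfi p hp hc => hb1' i hfi p hp hc
    · push_neg at hb2'
      have h := mrk_two_block I I.M1 (I.M1 ∩ I.M2) (I.M1 \ I.M2) Set.inter_subset_left
        Set.diff_subset (fun j hj hc => hc.2 hj.2) W hmem'
        (fun i hfi p hp hc => hb2' i hfi p hp hc)
      calc I.mrk K (I.M1 \ I.M2) + I.mrk K (I.M1 ∩ I.M2)
          = I.mrk K (I.M1 ∩ I.M2) + I.mrk K (I.M1 \ I.M2) := add_comm _ _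
        _ ≤ Module.finrank K ↥W := h
        _ ≤ l1 + l2 := hWfin
  omega

end Assemble

/-- Case II-D.  Let `I` be a TGICP such that:
(a) the SGICP formed by the receivers of `I_2` and `I_{12}` together (message set
`P_2 ∪ P_{12}`) has minrank `max mrk_2 mrk_{12}`; and
(b) either no receiver with demand in `P_1` has side information in `P_{12}`, or no receiver
with demand in `P_{12}` has side information in `P_1` (at most one of the interactions
`I_1 → I_{12}`, `I_{12} → I_1` exists).
Then `l*_q(I) = mrk_1 + max mrk_2 mrk_{12}`. -/
theorem stmt14 (K : Type*) [Field K] [Fintype K] {m n : ℕ} (I : TGICP m n)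
    (ha : I.mrk K ((I.M2 \ I.M1) ∪ (I.M1 ∩ I.M2)) =
      max (I.mrk K (I.M2 \ I.M1)) (I.mrk K (I.M1 ∩ I.M2)))
    (hb : (¬ ∃ i, I.f i ∈ I.M1 \ I.M2 ∧ ∃ p ∈ I.χ i, p ∈ I.M1 ∩ I.M2) ∨
      (¬ ∃ i, I.f i ∈ I.M1 ∩ I.M2 ∧ ∃ p ∈ I.χ i, p ∈ I.M1 \ I.M2)) :
    I.optLen K =
      I.mrk K (I.M1 \ I.M2) + max (I.mrk K (I.M2 \ I.M1)) (I.mrk K (I.M1 ∩ I.M2)) := by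
  classical
  have hM2eq : (I.M2 \ I.M1) ∪ (I.M1 ∩ I.M2) = I.M2 := by
    ext j
    constructor
    · rintro (h | h)
      exacts [h.1, h.2]
    · intro h
      by_cases h1 : j ∈ I.M1
      exacts [Or.inr ⟨h1, h⟩, Or.inl ⟨h, h1⟩]
  have ha' : I.mrk K I.M2 = max (I.mrk K (I.M2 \ I.M1)) (I.mrk K (I.M1 ∩ I.M2)) := by
    rw [← ha, hM2eq]
  obtain ⟨L, hL, hLeq⟩ := exists_code_opt K I
  refine le_antisymm ?_ ?_
  · calc I.optLen K ≤ L := Nat.sInf_le hL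
      _ = I.mrk K (I.M1 \ I.M2) + I.mrk K I.M2 := hLeq
      _ = _ := by rw [ha']
  · refine le_csInf ⟨L, hL⟩ ?_
    rintro L' ⟨l1, l2, G1, G2, hcode, rfl⟩
    exact code_lower_bound I hb G1 G2 hcode
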